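/- arXiv:2212.01118 — 2 statements merged into one kernel-verified Lean document; each statement's English description precedes it below -/
import Mathlib

section
/- Let S ⊆ ℝ^d be closed, and let x be a point of the medial axis ax(S) = {x : #π_S(x) > 1}. Then for each p ∈ π_S(x), setting λ = |x - p| > 0 and u = (x - p)/λ, the projection range satisfies d(p,u,π_S) = λ; in particular the ball B(x, λ) is a maximal empty weakly tangent ball to S at p. -/
/-!
Walk along the ray from `p` through `x`. Before reaching `x`, the point `y` at distance `μ < λ`
from `p` sees `p` as its unique nearest point: any other nearest point `s` would satisfy
`|x - y| + |y - s| = |x - s|`, and by strict convexity of the Euclidean norm this pins `s` to `p`.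
From `x` on, the point `y` at distance `μ ≥ λ` inherits every nearest point of `x`, since `x`
lies between `y` and `p`; as `x` is on the medial axis, `y` has several of them.
-/

open Metric Set

noncomputable def proj {d : ℕ} (S : Set (EuclideanSpace ℝ (Fin d)))
    (x : EuclideanSpace ℝ (Fin d)) : Set (EuclideanSpace ℝ (Fin d)) :=
  {q ∈ S | dist x q = Metric.infDist x S}

def medialAxis {d : ℕ} (S : Set (EuclideanSpace ℝ (Fin d))) :
    Set (EuclideanSpace ℝ (Fin d)) :=
  {x | (proj S x).Nontrivial}

theorem eq_of_dist_add_dist_eq_of_dist_eq {E : Type*} [NormedAddCommGroup E] [NormedSpace ℝ E]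
    [StrictConvexSpace ℝ E] {a b c c' : E} (hab : a ≠ b)
    (hc : dist a b + dist b c = dist a c) (hc' : dist a b + dist b c' = dist a c')
    (h : dist b c = dist b c') : c = c' := by
  have ray {z : E} (hz : dist a b + dist b z = dist a z) :
      ‖b - a‖ • (z - b) = ‖z - b‖ • (b - a) := by
    refine (sameRay_iff_norm_add.2 ?_).norm_smul_eq
    rw [add_comm, sub_add_sub_cancel, ← dist_eq_norm', ← dist_eq_norm', ← dist_eq_norm', hz]
  have hba : ‖b - a‖ ≠ 0 := norm_ne_zero_iff.2 (sub_ne_zero.2 hab.symm)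
  have hnorm : ‖c - b‖ = ‖c' - b‖ := by rw [← dist_eq_norm', ← dist_eq_norm', h]
  exact sub_left_injective (smul_right_injective E hba ((ray hc).trans (hnorm ▸ (ray hc').symm)))

theorem infDist_eq_dist_of_dist_add_dist_eq {α : Type*} [MetricSpace α] {S : Set α} {x y p : α}
    (hp : p ∈ S) (hx : infDist x S = dist x p) (hy : dist x y + dist y p = dist x p) :
    infDist y S = dist y p := by
  refine le_antisymm (infDist_le_dist_of_mem hp) ((le_infDist ⟨p, hp⟩).2 fun s hs => ?_)
  have := infDist_le_dist_of_mem hs (x := x)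
  have := dist_triangle x y s
  linarith

section Projection

variable {d : ℕ} {S : Set (EuclideanSpace ℝ (Fin d))} {x y p : EuclideanSpace ℝ (Fin d)}

theorem proj_subset_proj_of_dist_add_dist_eq (hp : p ∈ proj S y)
    (h : dist y x + dist x p = dist y p) : proj S x ⊆ proj S y := by
  rintro q ⟨hqS, hq⟩
  refine ⟨hqS, le_antisymm ?_ (infDist_le_dist_of_mem hqS)⟩
  have := infDist_le_dist_of_mem hp.1 (x := x)
  have := dist_triangle y x q
  linarith [hp.2]

theorem proj_eq_singleton_of_dist_add_dist_eq (hp : p ∈ proj S x) (hxy : x ≠ y)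
    (h : dist x y + dist y p = dist x p) : proj S y = {p} := by
  have hy : infDist y S = dist y p := infDist_eq_dist_of_dist_add_dist_eq hp.1 hp.2.symm h
  refine Subset.antisymm (fun s ⟨hsS, hs⟩ => ?_) (singleton_subset_iff.2 ⟨hp.1, hy.symm⟩)
  have hys : dist y s = dist y p := hs.trans hy
  have hxs : dist x y + dist y s = dist x s := by
    have := infDist_le_dist_of_mem hsS (x := x)
    linarith [dist_triangle x y s, hp.2]
  exact eq_of_dist_add_dist_eq_of_dist_eq hxy hxs h hys

end Projection

theorem dist_add_smul_add_smul {E : Type*} [NormedAddCommGroup E] [NormedSpace ℝ E] {u : E}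
    (hu : ‖u‖ = 1) (p : E) (μ ν : ℝ) : dist (p + μ • u) (p + ν • u) = |μ - ν| := by
  rw [dist_add_left, dist_eq_norm, ← sub_smul, norm_smul, hu, mul_one, Real.norm_eq_abs]

theorem dist_add_dist_eq_of_le_of_le {E : Type*} [NormedAddCommGroup E] [NormedSpace ℝ E] {u : E}
    (hu : ‖u‖ = 1) (p : E) {a b c : ℝ} (hab : a ≤ b) (hbc : b ≤ c) :
    dist (p + c • u) (p + b • u) + dist (p + b • u) (p + a • u) =
      dist (p + c • u) (p + a • u) := by
  simp only [dist_add_smul_add_smul hu, abs_of_nonneg (sub_nonneg.2 hab),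
    abs_of_nonneg (sub_nonneg.2 hbc), abs_of_nonneg (sub_nonneg.2 (hab.trans hbc))]
  ring

theorem stmt6_general {d : ℕ} (S : Set (EuclideanSpace ℝ (Fin d)))
    (x : EuclideanSpace ℝ (Fin d)) (hxS : x ∉ S)
    (hx : x ∈ medialAxis S) (p : EuclideanSpace ℝ (Fin d)) (hp : p ∈ proj S x) :
    0 < dist x p ∧
    BddAbove {μ : ℝ | proj S (p + μ • ((dist x p)⁻¹ • (x - p))) = {p}} ∧
    sSup {μ : ℝ | proj S (p + μ • ((dist x p)⁻¹ • (x - p))) = {p}} = dist x p := by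
  set l := dist x p
  set u := l⁻¹ • (x - p)
  have hl : 0 < l := dist_pos.2 (ne_of_mem_of_not_mem hp.1 hxS).symm
  have hu : ‖u‖ = 1 := by
    rw [norm_smul, norm_inv, Real.norm_of_nonneg hl.le, ← dist_eq_norm, inv_mul_cancel₀ hl.ne']
  have hpx : p + l • u = x := by
    rw [smul_smul, mul_inv_cancel₀ hl.ne', one_smul, add_sub_cancel]
  have between {a b : ℝ} (h0a : 0 ≤ a) (hab : a ≤ b) :
      dist (p + b • u) (p + a • u) + dist (p + a • u) p = dist (p + b • u) p := by
    simpa using dist_add_dist_eq_of_le_of_le hu p h0a hab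
  have lt_of_mem (μ : ℝ) (hμ : proj S (p + μ • u) = {p}) : μ < l := by
    by_contra! hlμ
    have hpμ : p ∈ proj S (p + μ • u) := hμ ▸ mem_singleton p
    have := proj_subset_proj_of_dist_add_dist_eq hpμ (hpx ▸ between hl.le hlμ)
    exact hx.not_subset_singleton (hμ ▸ this)
  have mem_of_mem_Ico (μ : ℝ) (hμ : μ ∈ Ico 0 l) : proj S (p + μ • u) = {p} := by
    refine proj_eq_singleton_of_dist_add_dist_eq hp (fun h => ?_) (hpx ▸ between hμ.1 hμ.2.le)
    have := dist_add_smul_add_smul hu p l μ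
    rw [hpx, ← h, dist_self, abs_of_pos (sub_pos.2 hμ.2)] at this
    linarith [hμ.2]
  have hlub : IsLUB {μ : ℝ | proj S (p + μ • u) = {p}} l :=
    (isLUB_Ico hl).of_subset_of_superset isLUB_Iio mem_of_mem_Ico lt_of_mem
  exact ⟨hl, hlub.bddAbove, hlub.csSup_eq ⟨0, mem_of_mem_Ico 0 ⟨le_rfl, hl⟩⟩⟩

theorem stmt6 {d : ℕ} (S : Set (EuclideanSpace ℝ (Fin d))) (hS : IsClosed S)
    (hne : S.Nonempty) (x : EuclideanSpace ℝ (Fin d)) (hxS : x ∉ S)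
    (hx : x ∈ medialAxis S) (p : EuclideanSpace ℝ (Fin d)) (hp : p ∈ proj S x) :
    0 < dist x p ∧
    BddAbove {μ : ℝ | proj S (p + μ • ((dist x p)⁻¹ • (x - p))) = {p}} ∧
    sSup {μ : ℝ | proj S (p + μ • ((dist x p)⁻¹ • (x - p))) = {p}} = dist x p :=
  stmt6_general S x hxS hx p hp
end

section
/- Let S ⊆ ℝ^d be closed. Then ax(S) ⊆ π_{ax,S}(UBP(S)) ⊆ closure(ax(S)), where π_{ax,S}(p,u) = p + d(p,u,π_S)·u and UBP(S) is the set of pairs (p,u) with p ∈ S, |u| = 1, and 0 < d(p,u,π_S) < ∞. -/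
open Metric Set

/-- The projection range `d(p, u, π_S)`. -/
noncomputable def projRange {d : ℕ} (S : Set (EuclideanSpace ℝ (Fin d)))
    (p u : EuclideanSpace ℝ (Fin d)) : ℝ :=
  sSup {l : ℝ | proj S (p + l • u) = {p}}

/-- The set of unit back projection pairs `UBP(S)`. -/
def UBP {d : ℕ} (S : Set (EuclideanSpace ℝ (Fin d))) :
    Set (EuclideanSpace ℝ (Fin d) × EuclideanSpace ℝ (Fin d)) :=
  {pu | pu.1 ∈ S ∧ ‖pu.2‖ = 1 ∧
    BddAbove {l : ℝ | proj S (pu.1 + l • pu.2) = {pu.1}} ∧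
    0 < projRange S pu.1 pu.2}

/-!
A point `x` of the medial axis has two nearest points; for either of them, `q`, strict convexity of
the norm shows that the ray from `q` through `x` projects onto `q` exactly up to `x`, so `x` is the
centre assigned to `(q, (x - q) / ‖x - q‖)`.

Conversely, let `x = p + R • u` be the end of the projection ray of `(p, u) ∈ UBP(S)`; since `S` is
closed, `p` is still a nearest point of `x`. Suppose nearest points were unique near `x`, and let
`y` maximise the distance to `S` over a small closed ball around `x`, with nearest point `q`. The
distance strictly increases in every direction at an acute angle with `y - q`, so `y` lies on the
boundary sphere with `y - x` pointing along `y - q`. Then `x` lies on the segment `[q, y]`, hence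
`q = p` and `y` lies on the projection ray beyond `x`, contradicting the maximality of `R`.
-/

open RealInnerProductSpace Filter Topology

section InnerProductSpace

variable {E : Type*} [NormedAddCommGroup E] [InnerProductSpace ℝ E] {x y v : E} {ρ : ℝ}

lemma eventually_add_smul_mem_closedBall_of_dist_lt (hy : dist y x < ρ) (v : E) :
    ∀ᶠ h in 𝓝[>] (0 : ℝ), y + h • v ∈ closedBall x ρ := by
  have hlim : Tendsto (fun h : ℝ => y + h • v) (𝓝 0) (𝓝 y) :=
    (by fun_prop : Continuous fun h : ℝ => y + h • v).tendsto' 0 y (by simp)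
  exact nhdsWithin_le_nhds (hlim.eventually (closedBall_mem_nhds_of_mem hy))

lemma eventually_add_smul_mem_closedBall_of_inner_neg (hy : y ∈ closedBall x ρ)
    (hv : ⟪v, y - x⟫ < 0) : ∀ᶠ h in 𝓝[>] (0 : ℝ), y + h • v ∈ closedBall x ρ := by
  have hlim : Tendsto (fun h : ℝ => h * ‖v‖ ^ 2 + 2 * ⟪v, y - x⟫) (𝓝 0)
      (𝓝 (2 * ⟪v, y - x⟫)) :=
    (by fun_prop : Continuous fun h : ℝ => h * ‖v‖ ^ 2 + 2 * ⟪v, y - x⟫).tendsto' 0 _ (by simp)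
  have hneg : ∀ᶠ h in 𝓝 (0 : ℝ), h * ‖v‖ ^ 2 + 2 * ⟪v, y - x⟫ < 0 :=
    hlim.eventually (gt_mem_nhds (by linarith))
  filter_upwards [nhdsWithin_le_nhds hneg, self_mem_nhdsWithin] with h hneg (hpos : 0 < h)
  have hρ : ‖y - x‖ ≤ ρ := by simpa [dist_eq_norm] using hy
  have hsq :
      ‖y + h • v - x‖ ^ 2 = ‖y - x‖ ^ 2 + h * (h * ‖v‖ ^ 2 + 2 * ⟪v, y - x⟫) := by
    rw [show y + h • v - x = (y - x) + h • v by abel, norm_add_sq_real, norm_smul,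
      real_inner_smul_right, real_inner_comm, Real.norm_eq_abs, mul_pow, sq_abs]
    ring
  rw [mem_closedBall, dist_eq_norm]
  refine pow_le_pow_iff_left₀ (norm_nonneg _) ((norm_nonneg _).trans hρ) two_ne_zero |>.1 ?_
  nlinarith [mul_neg_of_pos_of_neg hpos hneg, norm_nonneg (y - x)]

end InnerProductSpace

section Projection

variable {d : ℕ} {S : Set (EuclideanSpace ℝ (Fin d))} {p q u v x y : EuclideanSpace ℝ (Fin d)}

lemma proj_nonempty (hS : IsClosed S) (hne : S.Nonempty) (x : EuclideanSpace ℝ (Fin d)) :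
    (proj S x).Nonempty :=
  let ⟨q, hq, h⟩ := hS.exists_infDist_eq_dist hne x
  ⟨q, hq, h.symm⟩

lemma isClosed_setOf_mem_proj (S : Set (EuclideanSpace ℝ (Fin d)))
    (p : EuclideanSpace ℝ (Fin d)) : IsClosed {x | p ∈ proj S x} := by
  by_cases hp : p ∈ S
  · simpa [proj, hp] using isClosed_eq (by fun_prop) (continuous_infDist_pt S)
  · simp [proj, hp]

lemma proj_add_smul_eq_singleton {s t : ℝ} (hp : p ∈ proj S (p + t • v)) (hs : 0 ≤ s)
    (hst : s < t) : proj S (p + s • v) = {p} := by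
  set y := p + t • v
  set z := p + s • v
  have ht : 0 < t := hs.trans_lt hst
  have hyz : dist y z = (t - s) * ‖v‖ := by
    rw [dist_eq_norm, show y - z = (t - s) • v by simp only [y, z]; module, norm_smul,
      Real.norm_of_nonneg (by linarith)]
  have hzp : dist z p = s * ‖v‖ := by
    rw [dist_eq_norm, show z - p = s • v by simp [z], norm_smul, Real.norm_of_nonneg hs]
  have hyp : dist y p = t * ‖v‖ := by
    rw [dist_eq_norm, show y - p = t • v by simp [y], norm_smul, Real.norm_of_nonneg ht.le]
  have hyp_le : ∀ w ∈ S, dist y p ≤ dist y w := fun w hw => hp.2 ▸ infDist_le_dist_of_mem hw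
  have hinf : infDist z S = dist z p := by
    refine le_antisymm (infDist_le_dist_of_mem hp.1) ((le_infDist ⟨p, hp.1⟩).2 fun w hw => ?_)
    linarith [hyp_le w hw, dist_triangle y z w]
  ext w
  refine ⟨fun hw => ?_, fun hw => hw ▸ ⟨hp.1, hinf.symm⟩⟩
  have hzw : dist z w = s * ‖v‖ := by rw [hw.2, hinf, hzp]
  have hyw : dist y w = t * ‖v‖ :=
    le_antisymm (by linarith [dist_triangle y z w]) (hyp ▸ hyp_le w hw.1)
  -- equality in the triangle inequality puts `z` on the segment `[y, w]` (strict convexity)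
  have hline := eq_lineMap_of_dist_eq_mul_of_dist_eq_mul (r := (t - s) / t)
    (hyz.trans (by rw [hyw]; field_simp)) (hzw.trans (by rw [hyw]; field_simp; ring))
  rw [AffineMap.lineMap_apply_module'] at hline
  have hwp : ((t - s) / t) • (w - p) = 0 := by
    have hr : (t - s) / t * t = t - s := div_mul_cancel₀ _ ht.ne'
    linear_combination (norm := module) (-1 : ℝ) • hline + hr • v
  rw [smul_eq_zero, sub_eq_zero] at hwp
  exact hwp.resolve_left (div_ne_zero (by linarith) ht.ne')

lemma exists_mem_proj_tendsto_subseq (hS : IsClosed S) {ys s : ℕ → EuclideanSpace ℝ (Fin d)}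
    (hys : Tendsto ys atTop (𝓝 y)) (hs : ∀ n, s n ∈ proj S (ys n)) :
    ∃ w ∈ proj S y, ∃ φ : ℕ → ℕ, StrictMono φ ∧ Tendsto (s ∘ φ) atTop (𝓝 w) := by
  have hdist : Tendsto (fun n => dist (ys n) (s n)) atTop (𝓝 (infDist y S)) :=
    (((continuous_infDist_pt S).tendsto y).comp hys).congr fun n => (hs n).2.symm
  have hbound : Tendsto (fun n => dist y (ys n) + dist (ys n) (s n)) atTop
      (𝓝 (dist y y + infDist y S)) := (tendsto_const_nhds.dist hys).add hdist
  obtain ⟨C, hC⟩ := hbound.bddAbove_range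
  have hball : ∀ n, s n ∈ closedBall y C := fun n => by
    rw [mem_closedBall, dist_comm]
    exact (dist_triangle _ _ _).trans (hC (mem_range_self n))
  obtain ⟨w, -, φ, hφ, hlim⟩ := tendsto_subseq_of_bounded isBounded_closedBall hball
  have hwS : w ∈ S := hS.mem_of_tendsto hlim (.of_forall fun n => (hs (φ n)).1)
  have hyw : dist y w = infDist y S :=
    tendsto_nhds_unique ((hys.comp hφ.tendsto_atTop).dist hlim) (hdist.comp hφ.tendsto_atTop)
  exact ⟨w, ⟨hwS, hyw⟩, φ, hφ, hlim⟩

lemma inner_nonpos_of_infDist_add_smul_le {h : ℝ} {s : EuclideanSpace ℝ (Fin d)}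
    (hs : s ∈ proj S (y + h • v)) (hh : 0 < h) (hle : infDist (y + h • v) S ≤ infDist y S) :
    ⟪v, y - s⟫ ≤ 0 := by
  have hdist : dist (y + h • v) s ≤ dist y s :=
    hs.2 ▸ hle.trans (infDist_le_dist_of_mem hs.1)
  have hsq : dist (y + h • v) s ^ 2 = dist y s ^ 2 + h * (2 * ⟪v, y - s⟫ + h * ‖v‖ ^ 2) := by
    rw [dist_eq_norm, dist_eq_norm, show y + h • v - s = (y - s) + h • v by abel,
      norm_add_sq_real, norm_smul, real_inner_smul_right, real_inner_comm, Real.norm_eq_abs,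
      mul_pow, sq_abs]
    ring
  have : h * (2 * ⟪v, y - s⟫ + h * ‖v‖ ^ 2) ≤ 0 := by
    nlinarith [dist_nonneg (x := y + h • v) (y := s)]
  nlinarith [sq_nonneg ‖v‖, (mul_nonpos_iff_pos_imp_nonpos.1 this).1 hh]

lemma eventually_infDist_lt_infDist_add_smul (hS : IsClosed S) (hq : proj S y = {q})
    (hv : 0 < ⟪v, y - q⟫) : ∀ᶠ h in 𝓝[>] (0 : ℝ), infDist y S < infDist (y + h • v) S := by
  by_contra hcon
  obtain ⟨hs, hlim, hhs⟩ := exists_seq_forall_of_frequently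
    ((not_eventually.1 hcon).and_eventually self_mem_nhdsWithin)
  have hSne : S.Nonempty := ⟨q, (hq.symm ▸ mem_singleton q : q ∈ proj S y).1⟩
  choose s hs_mem using fun n => proj_nonempty hS hSne (y + hs n • v)
  have hys : Tendsto (fun n => y + hs n • v) atTop (𝓝 y) := by
    simpa using ((tendsto_nhds_of_tendsto_nhdsWithin hlim).smul_const v).const_add y
  obtain ⟨w, hw, φ, -, hφ⟩ := exists_mem_proj_tendsto_subseq hS hys hs_mem
  rw [hq, mem_singleton_iff] at hw
  have hnonpos : ∀ n, ⟪v, y - s n⟫ ≤ 0 := fun n =>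
    inner_nonpos_of_infDist_add_smul_le (hs_mem n) (hhs n).2 (not_lt.1 (hhs n).1)
  have hlim_inner : Tendsto (fun n => ⟪v, y - s (φ n)⟫) atTop (𝓝 ⟪v, y - q⟫) :=
    hw ▸ tendsto_const_nhds.inner (tendsto_const_nhds.sub hφ)
  exact hv.not_ge (le_of_tendsto' hlim_inner fun n => hnonpos (φ n))

lemma inner_sub_nonpos_of_isMaxOn {K : Set (EuclideanSpace ℝ (Fin d))} (hS : IsClosed S)
    (hq : proj S y = {q}) (hmax : IsMaxOn (infDist · S) K y)
    (hv : ∀ᶠ h in 𝓝[>] (0 : ℝ), y + h • v ∈ K) : ⟪v, y - q⟫ ≤ 0 := by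
  by_contra! hpos
  obtain ⟨h, hlt, hK⟩ := ((eventually_infDist_lt_infDist_add_smul hS hq hpos).and hv).exists
  exact (hmax hK).not_gt hlt

lemma smul_sub_eq_of_isMaxOn_closedBall {ρ : ℝ} (hS : IsClosed S) (hq : proj S y = {q})
    (hqy : q ≠ y) (hy : y ∈ closedBall x ρ) (hmax : IsMaxOn (infDist · S) (closedBall x ρ) y) :
    ρ • (y - q) = dist y q • (y - x) := by
  have hw : 0 < ‖y - q‖ := norm_pos_iff.2 (sub_ne_zero.2 hqy.symm)
  have hρ : ‖y - x‖ = ρ := by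
    refine (dist_eq_norm y x ▸ mem_closedBall.1 hy).antisymm (not_lt.1 fun hlt => ?_)
    have := inner_sub_nonpos_of_isMaxOn hS hq hmax
      (eventually_add_smul_mem_closedBall_of_dist_lt (dist_eq_norm y x ▸ hlt) (y - q))
    rw [real_inner_self_eq_norm_sq] at this
    nlinarith
  have hcs : ⟪y - q, y - x⟫ = ‖y - q‖ * ‖y - x‖ := by
    refine (real_inner_le_norm _ _).antisymm (not_lt.1 fun hlt => ?_)
    have hn : 0 < ‖y - x‖ := (norm_nonneg _).lt_of_ne fun h => by
      rw [eq_comm, norm_eq_zero] at h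
      simp [h] at hlt
    -- the direction `v` bisects the angle between `y - q` and `x - y`
    set v := ‖y - x‖ • (y - q) - ‖y - q‖ • (y - x)
    have hvn : ⟪v, y - x⟫ = ‖y - x‖ * (⟪y - q, y - x⟫ - ‖y - q‖ * ‖y - x‖) := by
      rw [inner_sub_left, real_inner_smul_left, real_inner_smul_left,
        real_inner_self_eq_norm_sq]
      ring
    have hvw : ⟪v, y - q⟫ = ‖y - q‖ * (‖y - q‖ * ‖y - x‖ - ⟪y - q, y - x⟫) := by
      rw [inner_sub_left, real_inner_smul_left, real_inner_smul_left,
        real_inner_self_eq_norm_sq, real_inner_comm (y - q)]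
      ring
    refine (inner_sub_nonpos_of_isMaxOn (v := v) hS hq hmax
      (eventually_add_smul_mem_closedBall_of_inner_neg hy ?_)).not_gt ?_
    · rw [hvn]; nlinarith
    · rw [hvw]; nlinarith
  rw [inner_eq_norm_mul_iff_real, hρ] at hcs
  rwa [dist_eq_norm]

lemma isLUB_setOf_proj_eq_singleton {t : ℝ} (hp : p ∈ proj S (p + t • u))
    (hne : proj S (p + t • u) ≠ {p}) (ht : 0 < t) :
    IsLUB {l : ℝ | proj S (p + l • u) = {p}} t :=
  (isLUB_Ico ht).of_subset_of_superset isLUB_Iic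
    (fun _ hl => proj_add_smul_eq_singleton hp hl.1 hl.2)
    fun _ hl => not_lt.1 fun htl => hne (proj_add_smul_eq_singleton (hl ▸ rfl) ht.le htl)

lemma proj_add_smul_eq_singleton_of_lt_projRange {l : ℝ} (hl₀ : 0 ≤ l)
    (hl : l < projRange S p u) : proj S (p + l • u) = {p} := by
  have hne : {l : ℝ | proj S (p + l • u) = {p}}.Nonempty := by
    by_contra hempty
    rw [not_nonempty_iff_eq_empty] at hempty
    simp only [projRange, hempty, Real.sSup_empty] at hl
    linarith
  obtain ⟨l', hl', hll'⟩ := exists_lt_of_lt_csSup hne hl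
  exact proj_add_smul_eq_singleton (hl'.symm ▸ rfl) hl₀ hll'

lemma mem_proj_add_projRange_smul (hR : 0 < projRange S p u) :
    p ∈ proj S (p + projRange S p u • u) := by
  have hclosed : IsClosed {l : ℝ | p ∈ proj S (p + l • u)} :=
    (isClosed_setOf_mem_proj S p).preimage (by fun_prop)
  have hIco : Ico 0 (projRange S p u) ⊆ {l : ℝ | p ∈ proj S (p + l • u)} := fun l hl => by
    rw [mem_ofPred_eq, proj_add_smul_eq_singleton_of_lt_projRange hl.1 hl.2]
    rfl
  have hIcc := hclosed.closure_subset_iff.2 hIco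
  rw [closure_Ico hR.ne] at hIcc
  exact hIcc (right_mem_Icc.2 hR.le)

lemma exists_gt_proj_add_smul_eq_singleton (hS : IsClosed S) {R : ℝ} (hR : 0 < R) (hu : u ≠ 0)
    (hx : proj S (p + R • u) = {p})
    (hsub : ∀ᶠ z in 𝓝 (p + R • u), (proj S z).Subsingleton) :
    ∃ l > R, proj S (p + l • u) = {p} := by
  set x := p + R • u
  obtain ⟨ε, hε, hball⟩ := Metric.eventually_nhds_iff.1 hsub
  have hpx : p ∈ proj S x := hx.symm ▸ mem_singleton p
  have hxp : 0 < dist x p := by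
    rw [dist_eq_norm, show x - p = R • u by simp [x]]
    exact norm_pos_iff.2 (smul_ne_zero hR.ne' hu)
  set ρ := min (ε / 2) (dist x p / 2)
  have hρ : 0 < ρ := by positivity
  obtain ⟨y, hy, hmax⟩ := (isCompact_closedBall x ρ).exists_isMaxOn
    (nonempty_closedBall.2 hρ.le) (continuous_infDist_pt S).continuousOn
  obtain ⟨q, hq⟩ := proj_nonempty hS ⟨p, hpx.1⟩ y
  have hyε : dist y x < ε := hy.trans_lt (by linarith [min_le_left (ε / 2) (dist x p / 2)])
  have hyq : proj S y = {q} := (hball hyε).eq_singleton_of_mem hq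
  have hD : dist x p ≤ dist y q := by
    rw [hq.2, hpx.2]
    exact hmax (mem_closedBall_self hρ.le)
  have hρD : ρ < dist y q := by linarith [min_le_right (ε / 2) (dist x p / 2)]
  have hkey := smul_sub_eq_of_isMaxOn_closedBall hS hyq
    (fun h => by simp [h] at hρD; linarith) hy hmax
  set c := dist y q / ρ - 1
  have hc : 0 < c := by simp only [c]; rw [sub_pos, one_lt_div hρ]; exact hρD
  have hy_eq : y = q + (c + 1) • (y - x) := by
    rw [show c + 1 = dist y q / ρ by simp [c], div_eq_inv_mul, mul_smul, ← hkey, smul_smul,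
      inv_mul_cancel₀ hρ.ne', one_smul]
    abel
  have hx_eq : x = q + c • (y - x) := by linear_combination (norm := module) hy_eq
  have hqp : q = p := by
    have := proj_add_smul_eq_singleton (hy_eq ▸ hq) hc.le (lt_add_one c)
    rw [← hx_eq, hx] at this
    exact (singleton_eq_singleton_iff.1 this).symm
  have hyx : y - x = (R / c) • u := by
    rw [div_eq_inv_mul, mul_smul, eq_inv_smul_iff₀ hc.ne']
    rw [hqp] at hx_eq
    linear_combination (norm := module) -hx_eq
  refine ⟨R + R / c, lt_add_of_pos_right R (by positivity), ?_⟩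
  rw [show p + (R + R / c) • u = y by linear_combination (norm := module) -hyx, hyq, hqp]

lemma medialAxis_subset_image_UBP :
    medialAxis S ⊆ (fun pu => pu.1 + projRange S pu.1 pu.2 • pu.2) '' UBP S := by
  rintro x ⟨q₁, hq₁, q₂, hq₂, hne⟩
  set r := dist x q₁
  have hr : 0 < r := by
    refine dist_pos.2 fun hxq => hne ?_
    have hxS : infDist x S = 0 := infDist_zero_of_mem (hxq ▸ hq₁.1)
    rw [← hxq, ← dist_eq_zero.1 (hq₂.2.trans hxS)]
  set u := r⁻¹ • (x - q₁)
  have hx : q₁ + r • u = x := by simp [u, smul_smul, hr.ne']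
  have hu : ‖u‖ = 1 := by simp [u, norm_smul, ← dist_eq_norm, r, hr.ne']
  have hproj_ne : proj S (q₁ + r • u) ≠ {q₁} := fun h => hne (by
    rw [hx] at h
    exact (h ▸ hq₂ : q₂ ∈ ({q₁} : Set _)).symm)
  have hlub := isLUB_setOf_proj_eq_singleton (hx ▸ hq₁) hproj_ne hr
  have hR : projRange S q₁ u = r :=
    hlub.csSup_eq ⟨0, proj_add_smul_eq_singleton (hx ▸ hq₁) le_rfl hr⟩
  exact ⟨(q₁, u), ⟨hq₁.1, hu, hlub.bddAbove, hR ▸ hr⟩, by simp [hR, hx]⟩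

lemma image_UBP_subset_closure_medialAxis (hS : IsClosed S) :
    (fun pu => pu.1 + projRange S pu.1 pu.2 • pu.2) '' UBP S ⊆ closure (medialAxis S) := by
  rintro _ ⟨⟨p, u⟩, ⟨-, hu, hbdd, hR⟩, rfl⟩
  dsimp only at hu hbdd hR ⊢
  by_contra hcl
  have hsub : ∀ᶠ z in 𝓝 (p + projRange S p u • u), (proj S z).Subsingleton := by
    simpa [mem_closure_iff_frequently, medialAxis, not_nontrivial_iff] using hcl
  have hx := hsub.self_of_nhds.eq_singleton_of_mem (mem_proj_add_projRange_smul hR)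
  obtain ⟨l, hlR, hl⟩ := exists_gt_proj_add_smul_eq_singleton hS hR
    (norm_ne_zero_iff.1 (hu ▸ one_ne_zero)) hx hsub
  exact (le_csSup hbdd hl).not_gt hlR

end Projection

theorem stmt8_general {d : ℕ} (S : Set (EuclideanSpace ℝ (Fin d))) (hS : IsClosed S) :
    medialAxis S ⊆ (fun pu => pu.1 + projRange S pu.1 pu.2 • pu.2) '' UBP S ∧
    (fun pu => pu.1 + projRange S pu.1 pu.2 • pu.2) '' UBP S ⊆
      closure (medialAxis S) :=
  ⟨medialAxis_subset_image_UBP, image_UBP_subset_closure_medialAxis hS⟩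

theorem stmt8 {d : ℕ} (S : Set (EuclideanSpace ℝ (Fin d))) (hS : IsClosed S)
    (hne : S.Nonempty) :
    medialAxis S ⊆ (fun pu => pu.1 + projRange S pu.1 pu.2 • pu.2) '' UBP S ∧
    (fun pu => pu.1 + projRange S pu.1 pu.2 • pu.2) '' UBP S ⊆
      closure (medialAxis S) :=
  stmt8_general S hS
end
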